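/- For integers k ≥ 2 and d ≥ 2, there exist two disjoint lattice polytopes P and Q contained in [0,k]^d with d(P,Q) ≤ 1/((d−1)k). Concretely, taking P = {(1,1,…,1)} and Q the simplex with vertices the origin and the d−1 points obtained from (k,…,k) by decreasing one of the first d−1 coordinates to k−1 (and setting the last coordinate to k), P and Q are disjoint and d(P,Q) ≤ 1/((d−1)k). -/

import Mathlib

/-!
The simplex `Q` lies in the hyperplane through the origin orthogonal to
`n = (k, …, k, 1 - (d-1)k)`, whereas `⟪n, P⟫ = 1`; hence `P ∉ Q`. The orthogonal projection
`P - n / ‖n‖²` of `P` onto this hyperplane is a nonnegative multiple of `v¹ + ⋯ + v^{d-1}` with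
total weight at most `1`, so it lies in `Q`, and its distance to `P` is
`1 / ‖n‖ ≤ 1 / ((d-1)k)` since `‖n‖² = (d-1)k² + ((d-1)k - 1)² ≥ ((d-1)k)²`.
-/

open scoped InnerProductSpace

lemma Fintype.sum_ite_eq_sub_add_card_nsmul {ι M : Type*} [Fintype ι] [DecidableEq ι]
    [AddCommGroup M] (a : ι) (x y : M) :
    ∑ i, (if i = a then x else y) = x - y + Fintype.card ι • y := by
  calc ∑ i, (if i = a then x else y) = ∑ i, ((if i = a then x - y else 0) + y) := by
        congr! 1 with i; split_ifs <;> abel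
    _ = x - y + Fintype.card ι • y := by
        rw [Finset.sum_add_distrib, Finset.sum_ite_eq', Finset.sum_const,
          if_pos (Finset.mem_univ a), Finset.card_univ]

namespace CornerSimplex

variable (m : ℕ) (K : ℝ)

def vertex (i : Fin m) : EuclideanSpace ℝ (Fin (m + 1)) :=
  WithLp.toLp 2 fun j => if j = i.castSucc then K - 1 else K

def simplex : Set (EuclideanSpace ℝ (Fin (m + 1))) :=
  convexHull ℝ ({0} ∪ Set.range (vertex m K))

def normal : EuclideanSpace ℝ (Fin (m + 1)) :=
  WithLp.toLp 2 fun j => if j = Fin.last m then 1 - m * K else K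

def ones : EuclideanSpace ℝ (Fin (m + 1)) :=
  WithLp.toLp 2 fun _ => 1

lemma setOf_eq_range_vertex :
    {x | ∃ i : Fin (m + 1), (i : ℕ) < m + 1 - 1 ∧
      x = WithLp.toLp 2 (fun j : Fin (m + 1) => if j = i then K - 1 else K)} =
      Set.range (vertex m K) := by
  ext x
  simp only [Set.mem_ofPred_eq, Set.mem_range, vertex, add_tsub_cancel_right]
  constructor
  · rintro ⟨i, hi, rfl⟩
    exact ⟨⟨i, hi⟩, rfl⟩
  · rintro ⟨i, rfl⟩
    exact ⟨i.castSucc, i.isLt, rfl⟩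

lemma inner_normal_vertex (i : Fin m) : ⟪normal m K, vertex m K i⟫_ℝ = 0 := by
  simp only [normal, vertex, PiLp.inner_apply, RCLike.inner_apply, Real.ringHom_apply, mul_ite,
    ite_mul, Fin.sum_univ_castSucc, Fin.castSucc_ne_last, ↓reduceIte, Fin.castSucc_inj,
    Fintype.sum_ite_eq_sub_add_card_nsmul, Fintype.card_fin, nsmul_eq_mul,
    (Fin.castSucc_lt_last i).ne']
  ring

lemma inner_normal_ones : ⟪normal m K, ones m⟫_ℝ = 1 := by
  simp [PiLp.inner_apply, Fin.sum_univ_castSucc, normal, ones]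

lemma norm_normal_sq : ‖normal m K‖ ^ 2 = m * K ^ 2 + (1 - m * K) ^ 2 := by
  simp [EuclideanSpace.real_norm_sq_eq, Fin.sum_univ_castSucc, normal]

lemma normal_ne_zero : normal m K ≠ 0 := fun h => by
  simpa [h] using inner_normal_ones m K

lemma simplex_subset_orthogonal : simplex m K ⊆ (ℝ ∙ normal m K)ᗮ := by
  refine convexHull_min (Set.union_subset (by simp) ?_) (Submodule.convex _)
  rintro _ ⟨i, rfl⟩
  exact Submodule.mem_orthogonal_singleton_iff_inner_right.2 (inner_normal_vertex m K i)

lemma ones_notMem_simplex : ones m ∉ simplex m K := fun h => by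
  simpa [inner_normal_ones] using
    Submodule.mem_orthogonal_singleton_iff_inner_right.1 (simplex_subset_orthogonal m K h)

lemma convex_simplex : Convex ℝ (simplex m K) :=
  convex_convexHull ℝ _

lemma zero_mem_simplex : 0 ∈ simplex m K :=
  subset_convexHull ℝ _ (Or.inl rfl)

lemma vertex_mem_simplex (i : Fin m) : vertex m K i ∈ simplex m K :=
  subset_convexHull ℝ _ (Or.inr ⟨i, rfl⟩)

lemma smul_sum_vertex_mem_simplex (hm : 0 < m) {t : ℝ} (ht₀ : 0 ≤ t) (ht₁ : m * t ≤ 1) :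
    t • (∑ i, vertex m K i) ∈ simplex m K := by
  have hcentroid : (∑ i, (m : ℝ)⁻¹ • vertex m K i) ∈ simplex m K :=
    (convex_simplex m K).sum_mem (fun _ _ => by positivity) (by simp [hm.ne'])
      fun i _ => vertex_mem_simplex m K i
  have hscaled := (convex_simplex m K).smul_mem_of_zero_mem (zero_mem_simplex m K) hcentroid
    (t := m * t) ⟨by positivity, ht₁⟩
  rwa [← Finset.smul_sum, smul_smul, mul_right_comm, mul_inv_cancel₀ (by positivity),
    one_mul] at hscaled

lemma ones_sub_smul_normal_eq_smul_sum_vertex :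
    ones m - (‖normal m K‖ ^ 2)⁻¹ • normal m K =
      ((m * K + K - 1) / ‖normal m K‖ ^ 2) • ∑ i, vertex m K i := by
  have hN : (m * K ^ 2 + (1 - m * K) ^ 2 : ℝ) ≠ 0 := by
    rw [← norm_normal_sq]
    exact pow_ne_zero 2 (norm_ne_zero_iff.2 (normal_ne_zero m K))
  rw [norm_normal_sq]
  ext j
  induction j using Fin.lastCases with
  | last =>
    simp only [ones, normal, PiLp.sub_apply, PiLp.smul_apply, ↓reduceIte, smul_eq_mul, vertex,
      WithLp.ofLp_sum, Finset.sum_apply, (Fin.castSucc_lt_last _).ne', Finset.sum_const,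
      Finset.card_univ, Fintype.card_fin, nsmul_eq_mul]
    field_simp
    ring
  | cast j =>
    simp only [ones, normal, PiLp.sub_apply, PiLp.smul_apply, Fin.castSucc_ne_last, ↓reduceIte,
      smul_eq_mul, vertex, WithLp.ofLp_sum, Finset.sum_apply, Fin.castSucc_inj, eq_comm (a := j),
      Fintype.sum_ite_eq_sub_add_card_nsmul, Fintype.card_fin, nsmul_eq_mul]
    field_simp
    ring

lemma exists_mem_simplex_dist_ones_le (hm : 0 < m) (hK : 2 ≤ K) :
    ∃ q ∈ simplex m K, dist (ones m) q ≤ 1 / (m * K) := by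
  have hm' : (1 : ℝ) ≤ m := Nat.one_le_cast.2 hm
  have hK₀ : 0 ≤ K := by linarith
  have hmK : 0 ≤ m * K * (K - 2) := mul_nonneg (by positivity) (by linarith)
  have hnorm : m * K ≤ ‖normal m K‖ :=
    le_of_sq_le_sq (by rw [norm_normal_sq]; nlinarith) (norm_nonneg _)
  refine ⟨ones m - (‖normal m K‖ ^ 2)⁻¹ • normal m K, ?_, ?_⟩
  · rw [ones_sub_smul_normal_eq_smul_sum_vertex]
    apply smul_sum_vertex_mem_simplex m K hm
    · exact div_nonneg (by nlinarith) (by positivity)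
    · rw [norm_normal_sq, mul_div_assoc', div_le_one (by nlinarith)]
      have hmK₁ : 0 ≤ m * K * (K - 1) := mul_nonneg (by positivity) (by linarith)
      nlinarith [mul_nonneg (sub_nonneg.2 hm') hmK₁]
  · rw [dist_eq_norm, sub_sub_cancel, norm_smul_of_nonneg (by positivity), pow_two, mul_inv,
      inv_mul_cancel_right₀ (norm_ne_zero_iff.2 (normal_ne_zero m K)), one_div]
    exact inv_anti₀ (by positivity) hnorm

end CornerSimplex

open CornerSimplex in
theorem stmt_5 (d k : ℕ) (hd : 2 ≤ d) (hk : 2 ≤ k) :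
    let P : Set (EuclideanSpace ℝ (Fin d)) := {WithLp.toLp 2 (fun _ => (1 : ℝ))}
    let Q : Set (EuclideanSpace ℝ (Fin d)) :=
      convexHull ℝ ({0} ∪
        {x | ∃ i : Fin d, (i : ℕ) < d - 1 ∧
          x = WithLp.toLp 2 (fun j : Fin d => if j = i then (k : ℝ) - 1 else (k : ℝ))})
    P ∩ Q = ∅ ∧ sInf (Set.image2 dist P Q) ≤ 1 / (((d : ℝ) - 1) * k) := by
  obtain ⟨m, rfl⟩ : ∃ m, d = m + 1 := ⟨d - 1, by omega⟩
  intro P Q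
  have hQ : Q = simplex m k := by rw [simplex, ← setOf_eq_range_vertex]
  have hP : P = {ones m} := rfl
  obtain ⟨q, hq, hdist⟩ := exists_mem_simplex_dist_ones_le m k (by omega) (by exact_mod_cast hk)
  refine ⟨by rw [hP, hQ, Set.singleton_inter_eq_empty]; exact ones_notMem_simplex m k, ?_⟩
  rw [hP, Set.image2_singleton_left, hQ]
  calc sInf (dist (ones m) '' simplex m k) ≤ dist (ones m) q :=
        csInf_le ⟨0, Set.forall_mem_image.2 fun _ _ => dist_nonneg⟩ (Set.mem_image_of_mem _ hq)
    _ ≤ 1 / ((((m + 1 : ℕ) : ℝ) - 1) * k) := by simpa using hdist
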